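/- Define $I_1(q) = \sum_{d=1}^{\infty} q^d \frac{(3d)!}{(d!)^3}\left(\sum_{m=d+1}^{3d} \frac{3}{m}\right)$ and $I_0(q) = \sum_{d=0}^{\infty} \frac{(3d)!}{(d!)^3} q^d$. Then the series $x(q) = q\, e^{I_1(q)/I_0(q)}$ satisfies the differential equation $q\frac{dx}{dq} = \frac{L^3}{I_0^2}\, x$, where $L = (1-27q)^{-1/3}$, and the statement $I_{1,1} = L^3/I_0^2$ holds where $I_{1,1} = 1 + q\frac{d}{dq}\frac{I_1}{I_0}$. -/

import Mathlib

open PowerSeries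

/-- The logarithmic derivative operator `D = q d/dq` on formal power series. -/
noncomputable def logD (f : PowerSeries ℚ) : PowerSeries ℚ :=
  PowerSeries.X * PowerSeries.derivative ℚ f

/-- `I₀(q) = ∑_{d≥0} (3d)!/(d!)³ qᵈ`. -/
noncomputable def I0 : PowerSeries ℚ :=
  PowerSeries.mk fun d => ((3 * d).factorial : ℚ) / ((d.factorial : ℚ)) ^ 3

/-- `I₁(q) = ∑_{d≥1} qᵈ (3d)!/(d!)³ (∑_{m=d+1}^{3d} 3/m)`. -/
noncomputable def I1 : PowerSeries ℚ :=
  PowerSeries.mk fun d =>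
    ((3 * d).factorial : ℚ) / ((d.factorial : ℚ)) ^ 3 *
      ∑ m ∈ Finset.Icc (d + 1) (3 * d), (3 : ℚ) / (m : ℚ)

/-!
With `θ = q d/dq`, both `I₀` and `I₁` are annihilated, up to an explicit inhomogeneous term for
`I₁`, by the hypergeometric operator `θ² - 3q(3θ + 1)(3θ + 2)`; on coefficients this is the
recurrence `(d + 1)² a_{d+1} = 3(3d + 1)(3d + 2) a_d` for `a_d = (3d)!/(d!)³`, and for `I₁` the
shifted harmonic sums contribute the extra terms. Abel's identity for this second-order operator,
whose leading coefficient is `1 - 27q`, shows that `(1 - 27q)(I₀² + I₀ θI₁ - I₁ θI₀)` is killed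
by `θ`, hence equals its constant term `1`. Dividing by `I₀²` gives `1 + θ(I₁/I₀) = L³/I₀²`, and
the equation for `x = q g` follows from `θx = x (1 + θ log g)`.
-/

lemma coeff_logD (f : ℚ⟦X⟧) (n : ℕ) : coeff n (logD f) = n * coeff n f := by
  cases n with
  | zero => simp [logD]
  | succ m => rw [logD, coeff_succ_X_mul, coeff_derivative]; push_cast; ring

lemma eq_of_logD_eq {f h : ℚ⟦X⟧} (hθ : logD f = logD h)
    (h0 : constantCoeff f = constantCoeff h) : f = h :=
  derivative.ext (X_mul_cancel hθ) h0

lemma logD_add (f h : ℚ⟦X⟧) : logD (f + h) = logD f + logD h := by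
  rw [logD, logD, logD, map_add, mul_add]

lemma logD_sub (f h : ℚ⟦X⟧) : logD (f - h) = logD f - logD h := by
  rw [logD, logD, logD, map_sub, mul_sub]

lemma logD_mul (f h : ℚ⟦X⟧) : logD (f * h) = logD f * h + f * logD h := by
  rw [logD, logD, logD, Derivation.leibniz, smul_eq_mul, smul_eq_mul]
  ring

lemma logD_X : logD X = X := by
  rw [logD, derivative_X, mul_one]

lemma logD_one_sub_mul_X (c : ℚ) : logD (1 - C c * X) = -(C c * X) := by
  rw [logD, map_sub, derivative_one, Derivation.leibniz, derivative_C, derivative_X]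
  simp [mul_comm]

noncomputable def wronskian (f h : ℚ⟦X⟧) : ℚ⟦X⟧ := f * logD h - h * logD f

lemma logD_mul_inv {f h : ℚ⟦X⟧} (hf : constantCoeff f ≠ 0) :
    logD (h * f⁻¹) = wronskian f h * f⁻¹ ^ 2 := by
  have hff : f * f⁻¹ = 1 := PowerSeries.mul_inv_cancel f hf
  rw [wronskian, logD_mul, logD, logD, logD, derivative_inv']
  linear_combination -(X * d⁄dX ℚ h * f⁻¹) * hff

/-- The hypergeometric operator `θ² - 3q(3θ + 1)(3θ + 2)`. -/
noncomputable def picardFuchs (f : ℚ⟦X⟧) : ℚ⟦X⟧ :=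
  logD (logD f) - X * (27 * logD (logD f) + 27 * logD f + 6 * f)

lemma coeff_zero_picardFuchs (f : ℚ⟦X⟧) : coeff 0 (picardFuchs f) = 0 := by
  simp [picardFuchs, logD]

lemma coeff_succ_picardFuchs (f : ℚ⟦X⟧) (n : ℕ) :
    coeff (n + 1) (picardFuchs f) =
      (n + 1) ^ 2 * coeff (n + 1) f - 3 * (3 * n + 1) * (3 * n + 2) * coeff n f := by
  simp only [picardFuchs, map_sub, map_add, coeff_succ_X_mul, ← map_ofNat C, coeff_C_mul,
    coeff_logD]
  push_cast
  ring

/-- Abel's identity for `picardFuchs`, with the inhomogeneity satisfied by `I₁`. -/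
lemma logD_wronskian_eq_zero {f h : ℚ⟦X⟧} (hf : picardFuchs f = 0)
    (hh : picardFuchs h = 27 * X * f - 2 * (1 - 27 * X) * logD f) :
    logD ((1 - 27 * X) * (f ^ 2 + wronskian f h)) = 0 := by
  unfold picardFuchs at hf hh
  rw [logD_mul, ← map_ofNat C 27, logD_one_sub_mul_X, map_ofNat, wronskian]
  simp only [logD_add, logD_sub, logD_mul, sq]
  linear_combination f * hh - h * hf

noncomputable def i0Coeff (d : ℕ) : ℚ := (3 * d).factorial / (d.factorial : ℚ) ^ 3

noncomputable def i1Coeff (d : ℕ) : ℚ := 3 * i0Coeff d * (harmonic (3 * d) - harmonic d)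

lemma i0Coeff_zero : i0Coeff 0 = 1 := by simp [i0Coeff]

lemma i0Coeff_succ (d : ℕ) :
    ((d : ℚ) + 1) ^ 2 * i0Coeff (d + 1) = 3 * (3 * d + 1) * (3 * d + 2) * i0Coeff d := by
  have hd : (d.factorial : ℚ) ≠ 0 := Nat.cast_ne_zero.2 d.factorial_ne_zero
  rw [i0Coeff, i0Coeff, show 3 * (d + 1) = 3 * d + 1 + 1 + 1 by ring]
  simp only [Nat.factorial_succ]
  push_cast
  field_simp
  ring

lemma i1Coeff_succ (d : ℕ) :
    ((d : ℚ) + 1) ^ 2 * i1Coeff (d + 1) = 3 * (3 * d + 1) * (3 * d + 2) * i1Coeff d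
      - 2 * ((d : ℚ) + 1) * i0Coeff (d + 1) + (54 * d + 27) * i0Coeff d := by
  have hd : ((d : ℚ) + 1) ≠ 0 := by positivity
  have h1 : (3 * (d : ℚ) + 1) ≠ 0 := by positivity
  have h2 : (3 * (d : ℚ) + 2) ≠ 0 := by positivity
  have ha : i0Coeff (d + 1) = 3 * (3 * d + 1) * (3 * d + 2) * i0Coeff d / ((d : ℚ) + 1) ^ 2 := by
    rw [eq_div_iff (by positivity), mul_comm, i0Coeff_succ]
  rw [i1Coeff, i1Coeff, ha, show 3 * (d + 1) = 3 * d + 1 + 1 + 1 by ring]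
  simp only [harmonic_succ]
  push_cast
  field_simp
  ring

lemma sum_Icc_three_div_eq (d : ℕ) :
    ∑ m ∈ Finset.Icc (d + 1) (3 * d), (3 : ℚ) / m = 3 * (harmonic (3 * d) - harmonic d) := by
  have hIcc (n : ℕ) : Finset.Icc 1 n = Finset.Ioc 0 n := rfl
  rw [harmonic_eq_sum_Icc, harmonic_eq_sum_Icc, hIcc, hIcc,
    ← Finset.sum_Ioc_consecutive _ (Nat.zero_le d) (by omega : d ≤ 3 * d),
    add_sub_cancel_left, Finset.mul_sum, ← Finset.Icc_add_one_left_eq_Ioc]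
  simp only [div_eq_mul_inv]

lemma coeff_I0 (n : ℕ) : coeff n I0 = i0Coeff n := by
  rw [I0, coeff_mk, i0Coeff]

lemma coeff_I1 (n : ℕ) : coeff n I1 = i1Coeff n := by
  rw [I1, coeff_mk, sum_Icc_three_div_eq, i1Coeff, i0Coeff]
  ring

lemma constantCoeff_I0 : constantCoeff I0 = 1 := by
  rw [← coeff_zero_eq_constantCoeff_apply, coeff_I0, i0Coeff_zero]

lemma picardFuchs_I0 : picardFuchs I0 = 0 := by
  ext (_ | n)
  · rw [coeff_zero_picardFuchs, map_zero]
  · rw [coeff_succ_picardFuchs, coeff_I0, coeff_I0, map_zero, i0Coeff_succ, sub_self]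

lemma picardFuchs_I1 : picardFuchs I1 = 27 * X * I0 - 2 * (1 - 27 * X) * logD I0 := by
  ext (_ | n)
  · rw [coeff_zero_picardFuchs]
    simp [logD]
  · rw [coeff_succ_picardFuchs, coeff_I1, coeff_I1, i1Coeff_succ, show
      27 * X * I0 - 2 * (1 - 27 * X) * logD I0 = 27 * (X * I0) + 54 * (X * logD I0) - 2 * logD I0
      by ring]
    simp only [map_add, map_sub, ← map_ofNat C, coeff_C_mul, coeff_succ_X_mul, coeff_logD,
      coeff_I0]
    push_cast
    ring

lemma one_sub_mul_sq_add_wronskian_I0_I1 : (1 - 27 * X) * (I0 ^ 2 + wronskian I0 I1) = 1 := by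
  refine eq_of_logD_eq ?_ ?_
  · rw [logD_wronskian_eq_zero picardFuchs_I0 picardFuchs_I1, logD, derivative_one, mul_zero]
  · simp [wronskian, logD, constantCoeff_I0]

theorem mirror_map_ODE_general (L g : PowerSeries ℚ)
    (hL : L ^ 3 * (1 - 27 * PowerSeries.X) = 1)
    (hg : PowerSeries.derivative ℚ g = PowerSeries.derivative ℚ (I1 * I0⁻¹) * g) :
    logD (PowerSeries.X * g) = (L ^ 3 * (I0⁻¹) ^ 2) * (PowerSeries.X * g) ∧
    1 + logD (I1 * I0⁻¹) = L ^ 3 * (I0⁻¹) ^ 2 := by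
  have hI0 : I0 * I0⁻¹ = 1 := PowerSeries.mul_inv_cancel I0 (by simp [constantCoeff_I0])
  have hW : I0 ^ 2 + wronskian I0 I1 = L ^ 3 := by
    linear_combination L ^ 3 * one_sub_mul_sq_add_wronskian_I0_I1 - (I0 ^ 2 + wronskian I0 I1) * hL
  have zingerZagier : 1 + logD (I1 * I0⁻¹) = L ^ 3 * I0⁻¹ ^ 2 := by
    rw [logD_mul_inv (by simp [constantCoeff_I0]), ← hW]
    linear_combination -(1 + I0 * I0⁻¹) * hI0
  refine ⟨?_, zingerZagier⟩
  rw [← zingerZagier, logD_mul, logD_X, logD, logD, hg]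
  ring

/-- let `g = exp(I₁/I₀)`, characterized (uniquely) by `g(0) = 1` and
`g' = (I₁/I₀)' g`.  Then `x = q g = q e^{I₁/I₀}` satisfies `q dx/dq = (L³/I₀²) x`
with `L = (1-27q)^{-1/3}`, and the Zinger–Zagier relation
`I_{1,1} = 1 + q d/dq (I₁/I₀) = L³/I₀²` holds. -/
theorem mirror_map_ODE (L g : PowerSeries ℚ)
    (hL : L ^ 3 * (1 - 27 * PowerSeries.X) = 1)
    (hL0 : PowerSeries.constantCoeff L = 1)
    (hg0 : PowerSeries.constantCoeff g = 1)
    (hg : PowerSeries.derivative ℚ g = PowerSeries.derivative ℚ (I1 * I0⁻¹) * g) :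
    logD (PowerSeries.X * g) = (L ^ 3 * (I0⁻¹) ^ 2) * (PowerSeries.X * g) ∧
    1 + logD (I1 * I0⁻¹) = L ^ 3 * (I0⁻¹) ^ 2 :=
  mirror_map_ODE_general L g hL hg
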